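/- Let H̃ be the free group on {x,b}, F the free group on {y₁,…,yₙ}, u ∈ F nontrivial, H = H̃ *_{[xᵏ,b]=u⁻¹} F, and r̃ ∈ H̃. If p ≥ 1 is minimal with [xᵏ,b]ᵖ ∈ ((r̃)) (normal closure in H̃), then H/⟨⟨r̃⟩⟩ is isomorphic to the amalgamated product H̃/((r̃)) *_{[xᵏ,b]=u⁻¹} ⟨y₁,…,yₙ | uᵖ⟩, and in particular the natural map H̃/((r̃)) → H/⟨⟨r̃⟩⟩ is injective. -/

import Mathlib

/-! Setup: `H̃` is the free group on `{x, b}` (modelled as `FreeGroup Bool`, `true ↦ x`,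
`false ↦ b`), `F` is the free group on `{y₁, …, yₙ}`, and
`H = H̃ *_{[xᵏ,b] = u⁻¹} F` is the amalgamated product over infinite cyclic subgroups,
realised as the pushout of the two maps `ℤ → H̃`, `ℤ → F` sending a generator of `ℤ` to
`[xᵏ,b]` and `u⁻¹` respectively. -/

/-- The word `[xᵏ,b] = x⁻ᵏb⁻¹xᵏb` in the free group on `{x, b}`. -/
def commWord (k : ℕ) : FreeGroup Bool :=
  ((FreeGroup.of true)⁻¹) ^ k * (FreeGroup.of false)⁻¹ * (FreeGroup.of true) ^ k *
    FreeGroup.of false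

/-- The two factors `H̃ = FreeGroup Bool` and `F = FreeGroup (Fin n)`. -/
def Fac (n : ℕ) : Bool → Type := fun i =>
  match i with
  | true => FreeGroup Bool
  | false => FreeGroup (Fin n)

instance (n : ℕ) : (i : Bool) → Group (Fac n i) := fun i =>
  match i with
  | true => inferInstanceAs (Group (FreeGroup Bool))
  | false => inferInstanceAs (Group (FreeGroup (Fin n)))

/-- The diagram of maps from the amalgamated copy of `ℤ` into the two factors, sending the
generator to `[xᵏ,b]` and to `u⁻¹` respectively. -/
def amalMaps (k n : ℕ) (u' : FreeGroup (Fin n)) :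
    ∀ i : Bool, Multiplicative ℤ →* Fac n i := fun i =>
  match i with
  | true => zpowersHom (FreeGroup Bool) (commWord k)
  | false => zpowersHom (FreeGroup (Fin n)) u'⁻¹

/-- The amalgamated product `H = H̃ *_{[xᵏ,b]=u⁻¹} F`. -/
abbrev Amal (k n : ℕ) (u' : FreeGroup (Fin n)) : Type :=
  Monoid.PushoutI (amalMaps k n u')

/-- The factors of the quotient amalgam: `H̃/((r̃))` and the one-relator group
`⟨y₁,…,yₙ | uᵖ⟩`. -/
def Fac2 (n p : ℕ) (u' : FreeGroup (Fin n)) (r : FreeGroup Bool) : Bool → Type := fun i =>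
  match i with
  | true => FreeGroup Bool ⧸ Subgroup.normalClosure {r}
  | false => FreeGroup (Fin n) ⧸ Subgroup.normalClosure {u' ^ p}

instance (n p : ℕ) (u' : FreeGroup (Fin n)) (r : FreeGroup Bool) :
    (i : Bool) → Group (Fac2 n p u' r i) := fun i =>
  match i with
  | true => inferInstanceAs (Group (FreeGroup Bool ⧸ Subgroup.normalClosure {r}))
  | false => inferInstanceAs (Group (FreeGroup (Fin n) ⧸ Subgroup.normalClosure {u' ^ p}))

/-- The amalgamating maps for the quotient amalgam, identifying the image of `[xᵏ,b]` in
`H̃/((r̃))` with the image of `u⁻¹` in `⟨y₁,…,yₙ | uᵖ⟩`. -/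
def amalMaps2 (k n p : ℕ) (u' : FreeGroup (Fin n)) (r : FreeGroup Bool) :
    ∀ i : Bool, Multiplicative ℤ →* Fac2 n p u' r i := fun i =>
  match i with
  | true => zpowersHom (FreeGroup Bool ⧸ Subgroup.normalClosure {r})
      (QuotientGroup.mk (commWord k))
  | false => zpowersHom (FreeGroup (Fin n) ⧸ Subgroup.normalClosure {u' ^ p})
      (QuotientGroup.mk u'⁻¹)

/-!
Killing `r̃` in `H` also kills `uᵖ`, since `u = [xᵏ,b]⁻¹` in `H` and `[xᵏ,b]ᵖ ∈ ((r̃))`. Hence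
`H/⟨⟨r̃⟩⟩` has the universal property of the amalgam of `H̃/((r̃))` and `⟨y₁,…,yₙ | uᵖ⟩` over `ℤ`.
In both factors the amalgamated generator has order exactly `p`: in `H̃/((r̃))` by minimality of
`p`, and in `⟨y₁,…,yₙ | uᵖ⟩` because `u ≠ 1`. So both amalgamating maps have kernel `pℤ`, the
amalgam is one over `ℤ/p` with injective maps, and its factors embed.

That `u` has order exactly `p` modulo `⟨⟨uᵖ⟩⟩` is seen through the Magnus embedding
`yᵢ ↦ 1 + Xᵢ` of the free group into the units of noncommutative power series. If `w` is a word
of least length `d` on which the image of `u` has a nonzero coefficient, then on units agreeing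
with `1` below degree `d` the coefficient of `w` is additive and invariant under conjugation by
arbitrary units. So it takes values in `p · ℤ · coeff_w(u)` on the normal closure of `uᵖ`, while
it is `t · coeff_w(u)` on `uᵗ`. The Magnus map is injective because on a reduced word with runs
`a₁^e₁ ⋯ aₘ^eₘ` the coefficient of `a₁ ⋯ aₘ` is `e₁ ⋯ eₘ`.
-/

section RunLengthEncoding

variable {β : Type*} [DecidableEq β]

/-- An entry `(x, m)` stands for a run of `m + 1` copies of `x`. -/
def runLengthEncoding : List β → List (β × ℕ)
  | [] => []
  | x :: L =>
    match runLengthEncoding L with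
    | (y, m) :: R => if x = y then (y, m + 1) :: R else (x, 0) :: (y, m) :: R
    | [] => [(x, 0)]

lemma exists_runLengthEncoding_cons (x : β) (L : List β) :
    ∃ m R, runLengthEncoding (x :: L) = (x, m) :: R := by
  rw [runLengthEncoding]
  split
  · split_ifs with h
    · subst h
      exact ⟨_, _, rfl⟩
    · exact ⟨_, _, rfl⟩
  · exact ⟨_, _, rfl⟩

lemma isChain_runLengthEncoding {S : β → β → Prop} {L : List β} (hL : L.IsChain S) :
    (runLengthEncoding L).IsChain (fun r s => r.1 ≠ s.1 ∧ S r.1 s.1) := by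
  induction L with
  | nil => exact List.isChain_nil
  | cons x L ih =>
    cases L with
    | nil => exact List.isChain_singleton _
    | cons y L =>
      obtain ⟨hxy, hL⟩ := List.isChain_cons_cons.1 hL
      obtain ⟨m, R, hR⟩ := exists_runLengthEncoding_cons y L
      have ih' := ih hL
      rw [hR] at ih'
      rw [runLengthEncoding, hR]
      dsimp only
      split_ifs with h
      · subst h
        exact (List.isChain_cons.1 ih').2.cons (List.isChain_cons.1 ih').1
      · exact ih'.cons (by simpa using ⟨h, hxy⟩)

end RunLengthEncoding

lemma FreeGroup.mk_eq_prod_runLengthEncoding {α : Type*} [DecidableEq α] (L : List (α × Bool)) :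
    mk L = ((runLengthEncoding L).map fun r => mk [r.1] ^ (r.2 + 1)).prod := by
  induction L with
  | nil => rfl
  | cons x L ih =>
    rw [show mk (x :: L) = mk [x] * mk L from (mul_mk (L₁ := [x])).symm, ih]
    cases hR : runLengthEncoding L with
    | nil => simp [runLengthEncoding, hR]
    | cons r R =>
      obtain ⟨y, m⟩ := r
      rw [runLengthEncoding, hR]
      dsimp only
      split_ifs with h
      · subst h
        simp only [List.map_cons, List.prod_cons, pow_succ' _ (m + 1), mul_assoc]
      · simp only [List.map_cons, List.prod_cons, zero_add, pow_one]

/-- Formal power series with integer coefficients in the noncommuting variables `α`, a series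
being given by its coefficients on words. -/
def FreePowerSeries (α : Type*) : Type _ := List α → ℤ

namespace FreePowerSeries

variable {α : Type*}

instance : AddCommGroup (FreePowerSeries α) := Pi.addCommGroup

instance : One (FreePowerSeries α) := ⟨fun | [] => 1 | _ :: _ => 0⟩

instance : Mul (FreePowerSeries α) :=
  ⟨fun f g w => ∑ j ∈ Finset.range (w.length + 1), f (w.take j) * g (w.drop j)⟩

section Ring

variable (f g h : FreePowerSeries α) (w : List α) (a : α)

@[simp] lemma zero_apply : (0 : FreePowerSeries α) w = 0 := rfl
@[simp] lemma add_apply : (f + g) w = f w + g w := rfl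
@[simp] lemma neg_apply : (-f) w = -f w := rfl
@[simp] lemma sub_apply : (f - g) w = f w - g w := rfl
@[simp] lemma zsmul_apply (c : ℤ) : (c • f) w = c * f w := rfl
@[simp] lemma one_nil : (1 : FreePowerSeries α) [] = 1 := rfl
@[simp] lemma one_cons : (1 : FreePowerSeries α) (a :: w) = 0 := rfl

lemma one_apply_of_ne_nil {w : List α} (hw : w ≠ []) : (1 : FreePowerSeries α) w = 0 := by
  cases w
  · exact absurd rfl hw
  · rfl

lemma mul_apply : (f * g) w = ∑ j ∈ Finset.range (w.length + 1), f (w.take j) * g (w.drop j) :=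
  rfl

@[simp] lemma mul_nil : (f * g) [] = f [] * g [] := by
  simp [mul_apply]

def shift (a : α) (f : FreePowerSeries α) : FreePowerSeries α := fun w => f (a :: w)

@[simp] lemma shift_apply : shift a f w = f (a :: w) := rfl

lemma mul_cons : (f * g) (a :: w) = f [] * g (a :: w) + (shift a f * g) w := by
  rw [mul_apply, List.length_cons, Finset.sum_range_succ', add_comm]
  rfl

lemma shift_one : shift a (1 : FreePowerSeries α) = 0 := rfl

lemma shift_mul : shift a (f * g) = f [] • shift a g + shift a f * g := by
  funext w
  simp [mul_cons]

protected lemma zero_mul : 0 * f = 0 := by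
  funext w
  simp [mul_apply]

protected lemma mul_zero : f * 0 = 0 := by
  funext w
  simp [mul_apply]

protected lemma add_mul : (f + g) * h = f * h + g * h := by
  funext w
  simp [mul_apply, add_mul, Finset.sum_add_distrib]

protected lemma mul_add : f * (g + h) = f * g + f * h := by
  funext w
  simp [mul_apply, mul_add, Finset.sum_add_distrib]

protected lemma zsmul_mul (c : ℤ) : (c • f) * g = c • (f * g) := by
  funext w
  simp [mul_apply, Finset.mul_sum, mul_assoc]

protected lemma one_mul : 1 * f = f := by
  funext w
  cases w with
  | nil => simp
  | cons a w => simp [mul_cons, shift_one, FreePowerSeries.zero_mul]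

protected lemma mul_one : f * 1 = f := by
  funext w
  induction w generalizing f with
  | nil => simp
  | cons a w ih => simp [mul_cons, ih]

protected lemma mul_assoc : f * g * h = f * (g * h) := by
  funext w
  induction w generalizing f g h with
  | nil => simp [mul_assoc]
  | cons a w ih =>
    simp only [mul_cons, shift_mul, FreePowerSeries.add_mul, FreePowerSeries.zsmul_mul, add_apply,
      zsmul_apply, mul_nil, ih]
    ring

instance : Ring (FreePowerSeries α) :=
  { (inferInstance : AddCommGroup (FreePowerSeries α)) with
    mul_assoc := FreePowerSeries.mul_assoc
    one_mul := FreePowerSeries.one_mul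
    mul_one := FreePowerSeries.mul_one
    zero_mul := FreePowerSeries.zero_mul
    mul_zero := FreePowerSeries.mul_zero
    left_distrib := FreePowerSeries.mul_add
    right_distrib := FreePowerSeries.add_mul }

end Ring

def VanishesBelow (d : ℕ) (f : FreePowerSeries α) : Prop :=
  ∀ w : List α, w.length < d → f w = 0

namespace VanishesBelow

variable {d : ℕ} {f g : FreePowerSeries α}

lemma zero : VanishesBelow d (0 : FreePowerSeries α) := fun _ _ => rfl

lemma add (hf : VanishesBelow d f) (hg : VanishesBelow d g) : VanishesBelow d (f + g) :=
  fun w hw => by simp [hf w hw, hg w hw]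

lemma neg (hf : VanishesBelow d f) : VanishesBelow d (-f) :=
  fun w hw => by simp [hf w hw]

lemma mul_left (hf : VanishesBelow d f) (x : FreePowerSeries α) : VanishesBelow d (x * f) :=
  fun w hw => Finset.sum_eq_zero fun j _ => by
    rw [hf _ (by rw [List.length_drop]; omega), mul_zero]

lemma mul_right (hf : VanishesBelow d f) (x : FreePowerSeries α) : VanishesBelow d (f * x) :=
  fun w hw => Finset.sum_eq_zero fun j _ => by
    rw [hf _ (by rw [List.length_take]; omega), zero_mul]

end VanishesBelow

lemma apply_mul_of_vanishesBelow_right {f g : FreePowerSeries α} {w : List α}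
    (hg : VanishesBelow w.length g) : (f * g) w = f [] * g w := by
  rw [mul_apply, Finset.sum_eq_single_of_mem 0 (by simp)]
  · simp
  · intro j hj hj0
    rw [hg _ (by rw [List.length_drop]; simp at hj; omega), mul_zero]

lemma apply_mul_of_vanishesBelow_left {f g : FreePowerSeries α} {w : List α}
    (hf : VanishesBelow w.length f) : (f * g) w = f w * g [] := by
  rw [mul_apply, Finset.sum_eq_single_of_mem w.length (by simp)]
  · simp
  · intro j hj hjw
    rw [hf _ (by rw [List.length_take]; simp at hj; omega), zero_mul]

def unitsFiltration (d : ℕ) : Subgroup (FreePowerSeries α)ˣ where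
  carrier := {v | VanishesBelow d ((v : FreePowerSeries α) - 1)}
  one_mem' := by simpa using VanishesBelow.zero
  mul_mem' {v v'} hv hv' := by
    have : (v * v' : FreePowerSeries α) - 1 = (v - 1) * v' + (v' - 1) := by noncomm_ring
    simpa only [Set.mem_ofPred_eq, Units.val_mul, this] using (hv.mul_right _).add hv'
  inv_mem' {v} hv := by
    have : (↑v⁻¹ : FreePowerSeries α) - 1 = -(↑v⁻¹ * (v - 1)) := by simp [mul_sub]
    simpa [this] using (hv.mul_left _).neg

lemma mem_unitsFiltration {d : ℕ} {v : (FreePowerSeries α)ˣ} :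
    v ∈ unitsFiltration d ↔ VanishesBelow d ((v : FreePowerSeries α) - 1) := Iff.rfl

instance (d : ℕ) : (unitsFiltration (α := α) d).Normal where
  conj_mem v hv c := by
    have : (c * v * ↑c⁻¹ : FreePowerSeries α) - 1 = c * (v - 1) * ↑c⁻¹ := by
      simp [mul_sub, sub_mul, mul_assoc]
    simpa only [mem_unitsFiltration, Units.val_mul, this] using (hv.mul_left _).mul_right _

section Coeff

variable {w : List α}

lemma coeff_mul_of_mem (hw : w ≠ []) {v v' : (FreePowerSeries α)ˣ}
    (hv : v ∈ unitsFiltration w.length) (hv' : v' ∈ unitsFiltration w.length) :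
    ((v * v' : (FreePowerSeries α)ˣ) : FreePowerSeries α) w =
      (v : FreePowerSeries α) w + (v' : FreePowerSeries α) w := by
  have hsplit : ((v * v' : (FreePowerSeries α)ˣ) : FreePowerSeries α) =
      (v - 1) * (v' - 1) + v + v' - 1 := by noncomm_ring
  have hnil : ((v : FreePowerSeries α) - 1) [] = 0 := hv [] (List.length_pos_of_ne_nil hw)
  rw [hsplit, sub_apply, add_apply, add_apply, apply_mul_of_vanishesBelow_right hv', hnil,
    one_apply_of_ne_nil hw]
  ring

def coeffHom (hw : w ≠ []) : unitsFiltration (α := α) w.length →* Multiplicative ℤ where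
  toFun v := Multiplicative.ofAdd (((v : (FreePowerSeries α)ˣ) : FreePowerSeries α) w)
  map_one' := by simp [one_apply_of_ne_nil hw]
  map_mul' v v' := by simp [coeff_mul_of_mem hw v.2 v'.2]

lemma coeff_zpow_of_mem (hw : w ≠ []) {v : (FreePowerSeries α)ˣ}
    (hv : v ∈ unitsFiltration w.length) (e : ℤ) :
    ((v ^ e : (FreePowerSeries α)ˣ) : FreePowerSeries α) w = e * (v : FreePowerSeries α) w := by
  simpa [coeffHom] using congrArg Multiplicative.toAdd (map_zpow (coeffHom hw) ⟨v, hv⟩ e)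

lemma coeff_conj_of_mem (hw : w ≠ []) {v : (FreePowerSeries α)ˣ}
    (hv : v ∈ unitsFiltration w.length) (c : (FreePowerSeries α)ˣ) :
    ((c * v * c⁻¹ : (FreePowerSeries α)ˣ) : FreePowerSeries α) w =
      (v : FreePowerSeries α) w := by
  have hsplit : ((c * v * c⁻¹ : (FreePowerSeries α)ˣ) : FreePowerSeries α) =
      c * (v - 1) * ↑c⁻¹ + 1 := by simp [mul_sub, sub_mul, mul_assoc]
  have hc : (c : FreePowerSeries α) [] * (↑c⁻¹ : FreePowerSeries α) [] = 1 := by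
    rw [← mul_nil, Units.mul_inv, one_nil]
  rw [hsplit, add_apply, apply_mul_of_vanishesBelow_left (hv.mul_left _),
    apply_mul_of_vanishesBelow_right hv, one_apply_of_ne_nil hw, sub_apply,
    one_apply_of_ne_nil hw]
  linear_combination ((v : FreePowerSeries α) w) * hc

lemma coeff_mem_zmultiples_of_mem_normalClosure (hw : w ≠ []) {g v : (FreePowerSeries α)ˣ}
    (hg : g ∈ unitsFiltration w.length) (hv : v ∈ Subgroup.normalClosure {g}) :
    (v : FreePowerSeries α) w ∈ AddSubgroup.zmultiples ((g : FreePowerSeries α) w) := by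
  have hle : Subgroup.normalClosure {g} ≤ unitsFiltration w.length :=
    Subgroup.normalClosure_le_normal (by simpa using hg)
  induction hv using Subgroup.closure_induction with
  | mem x hx =>
    obtain ⟨g', hg', hconj⟩ := Group.mem_conjugatesOfSet_iff.1 hx
    obtain rfl := Set.mem_singleton_iff.1 hg'
    obtain ⟨c, rfl⟩ := isConj_iff.1 hconj
    rw [coeff_conj_of_mem hw hg]
    exact AddSubgroup.mem_zmultiples _
  | one => simp [one_apply_of_ne_nil hw]
  | mul x y hx hy ihx ihy =>
    rw [coeff_mul_of_mem hw (hle hx) (hle hy)]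
    exact add_mem ihx ihy
  | inv x hx ihx =>
    rw [← zpow_neg_one, coeff_zpow_of_mem hw (hle hx), neg_one_mul]
    exact neg_mem ihx

end Coeff

lemma exists_coeff_ne_zero_of_mem {g : (FreePowerSeries α)ˣ} (hg1 : g ∈ unitsFiltration 1)
    (hg : g ≠ 1) :
    ∃ w ≠ [], g ∈ unitsFiltration w.length ∧ (g : FreePowerSeries α) w ≠ 0 := by
  classical
  have hex : ∃ d, ∃ w : List α, w.length = d ∧ ((g : FreePowerSeries α) - 1) w ≠ 0 := by
    by_contra! h
    exact hg (Units.ext (sub_eq_zero.1 (funext fun w => h _ w rfl)))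
  obtain ⟨w, hwd, hw⟩ := Nat.find_spec hex
  have hne : w ≠ [] := fun h => hw (hg1 w (by simp [h]))
  refine ⟨w, hne, fun w' hw' => ?_, ?_⟩
  · by_contra h
    exact Nat.find_min hex (hwd ▸ hw') ⟨w', rfl, h⟩
  · simpa [one_apply_of_ne_nil hne] using hw

lemma dvd_of_pow_mem_normalClosure_pow {g : (FreePowerSeries α)ˣ} {w : List α} (hw : w ≠ [])
    (hg : g ∈ unitsFiltration w.length) (hgw : (g : FreePowerSeries α) w ≠ 0) {p t : ℕ}
    (h : g ^ t ∈ Subgroup.normalClosure {g ^ p}) : p ∣ t := by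
  rw [← zpow_natCast, ← zpow_natCast] at h
  have := coeff_mem_zmultiples_of_mem_normalClosure hw (zpow_mem hg p) h
  rw [coeff_zpow_of_mem hw hg, coeff_zpow_of_mem hw hg] at this
  obtain ⟨m, hm⟩ := AddSubgroup.mem_zmultiples_iff.1 this
  have : (t : ℤ) = m * p := by
    apply mul_right_cancel₀ hgw
    rw [← hm, smul_eq_mul, mul_assoc]
  exact_mod_cast Dvd.intro_left m this.symm

def supportedOnPowers (a : α) : Submonoid (FreePowerSeries α) where
  carrier := {f | ∀ w : List α, (∃ b ∈ w, b ≠ a) → f w = 0}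
  one_mem' := by
    rintro (_ | ⟨c, w⟩) ⟨b, hb, -⟩
    · simp at hb
    · rfl
  mul_mem' {f g} hf hg w := by
    rintro ⟨b, hb, hba⟩
    refine Finset.sum_eq_zero fun j _ => ?_
    rw [← List.take_append_drop j w, List.mem_append] at hb
    rcases hb with hb | hb
    · rw [hf _ ⟨b, hb, hba⟩, zero_mul]
    · rw [hg _ ⟨b, hb, hba⟩, mul_zero]

lemma shift_eq_zero_of_mem {a b : α} {f : FreePowerSeries α} (hf : f ∈ supportedOnPowers a)
    (hb : b ≠ a) : shift b f = 0 :=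
  funext fun w => hf (b :: w) ⟨b, List.mem_cons_self, hb⟩

section Magnus

variable [DecidableEq α]

lemma mul_apply_cons_of_mem {a c : α} {f g : FreePowerSeries α} {w : List α}
    (hf : f ∈ supportedOnPowers a) (hf1 : f [] = 1) (hw : (c :: w).IsChain (· ≠ ·)) :
    (f * g) (c :: w) = g (c :: w) + if c = a then f [a] * g w else 0 := by
  rw [mul_cons, hf1, one_mul]
  split_ifs with hca
  · subst hca
    cases w with
    | nil => simp
    | cons c' w =>
      have hc' : c' ≠ c := (List.isChain_cons_cons.1 hw).1.symm
      have : shift c' (shift c f) = 0 := funext fun x => hf (c :: c' :: x) ⟨c', by simp, hc'⟩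
      rw [mul_cons, this, zero_mul, zero_apply, add_zero, shift_apply]
  · rw [shift_eq_zero_of_mem hf hca, zero_mul, zero_apply]

/-- A word without two equal adjacent letters can only be read off such a product by taking at
most one letter from each factor. -/
lemma prod_apply_of_isChain (fs : List (α × FreePowerSeries α))
    (hfs : ∀ x ∈ fs, x.2 ∈ supportedOnPowers x.1 ∧ x.2 [] = 1) {w : List α}
    (hw : w.IsChain (· ≠ ·)) (hlen : fs.length ≤ w.length) :
    (fs.map Prod.snd).prod w =
      if w = fs.map Prod.fst then (fs.map fun x => x.2 [x.1]).prod else 0 := by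
  induction fs generalizing w with
  | nil => cases w <;> simp
  | cons x fs ih =>
    obtain ⟨a, f⟩ := x
    obtain _ | ⟨c, w⟩ := w
    · simp at hlen
    have hlen' : fs.length ≤ w.length := by simpa using hlen
    have hfs' : ∀ y ∈ fs, y.2 ∈ supportedOnPowers y.1 ∧ y.2 [] = 1 :=
      fun y hy => hfs y (List.mem_cons_of_mem _ hy)
    obtain ⟨hf, hf1⟩ := hfs (a, f) List.mem_cons_self
    have hw' : w.IsChain (· ≠ ·) := hw.tail
    rw [List.map_cons, List.prod_cons, mul_apply_cons_of_mem hf hf1 hw,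
      ih hfs' hw (by simp; omega), ih hfs' hw' hlen',
      if_neg (fun h => by have := congrArg List.length h; simp at this; omega), zero_add]
    by_cases hca : c = a <;> simp [hca]

def X (a : α) : FreePowerSeries α := fun w => if w = [a] then 1 else 0

/-- The geometric series `∑ₖ (-Xₐ)ᵏ`, inverse to `1 + Xₐ`. -/
def geom (a : α) : FreePowerSeries α := fun w => if ∀ b ∈ w, b = a then (-1) ^ w.length else 0

@[simp] lemma X_nil (a : α) : X a [] = 0 := rfl

lemma shift_X (a b : α) : shift b (X a) = if b = a then 1 else 0 := by
  funext w
  cases w <;> split_ifs <;> simp_all [X]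

@[simp] lemma geom_nil (a : α) : geom a [] = 1 := rfl

lemma shift_geom (a b : α) : shift b (geom a) = if b = a then -geom a else 0 := by
  funext w
  by_cases h : b = a <;> simp [geom, h, pow_succ]
  split_ifs <;> simp

lemma X_mul_geom (a : α) : X a * geom a = 1 - geom a := by
  funext w
  cases w with
  | nil => simp
  | cons b w =>
    rw [mul_cons, X_nil, zero_mul, zero_add, sub_apply, one_cons, zero_sub,
      ← shift_apply (geom a), shift_X, shift_geom]
    split_ifs <;> simp

lemma geom_mul_X (a : α) : geom a * X a = 1 - geom a := by
  funext w
  induction w with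
  | nil => simp
  | cons b w ih =>
    rw [mul_cons, shift_geom, geom_nil, one_mul, sub_apply, one_cons, zero_sub,
      ← shift_apply (geom a), shift_geom]
    split_ifs with h
    · rw [neg_mul, neg_apply, ih]
      cases w <;> simp [X, h]
    · simp [X, h]

def oneAddX (a : α) : (FreePowerSeries α)ˣ where
  val := 1 + X a
  inv := geom a
  val_inv := by rw [add_mul, one_mul, X_mul_geom, add_sub_cancel]
  inv_val := by rw [mul_add, mul_one, geom_mul_X, add_sub_cancel]

lemma oneAddX_mem_units_supportedOnPowers (a : α) : oneAddX a ∈ (supportedOnPowers a).units := by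
  refine ⟨fun w ⟨b, hb, hba⟩ => ?_, fun w ⟨b, hb, hba⟩ => ?_⟩
  · have h1 : w ≠ [] := List.ne_nil_of_mem hb
    have h2 : w ≠ [a] := by rintro rfl; simp_all
    simp [oneAddX, X, one_apply_of_ne_nil h1, h2]
  · have : ¬ ∀ c ∈ w, c = a := fun h => hba (h b hb)
    simp [oneAddX, geom, this]

lemma oneAddX_mem_unitsFiltration_one (a : α) : oneAddX a ∈ unitsFiltration 1 := by
  intro w hw
  simp [List.length_eq_zero_iff.1 (Nat.lt_one_iff.1 hw), oneAddX]

def magnus : FreeGroup α →* (FreePowerSeries α)ˣ := FreeGroup.lift oneAddX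

lemma magnus_mem_unitsFiltration_one (u : FreeGroup α) : magnus u ∈ unitsFiltration 1 := by
  induction u using FreeGroup.induction_on with
  | C1 => exact one_mem _
  | of a => simpa [magnus] using oneAddX_mem_unitsFiltration_one a
  | inv_of a h => rw [map_inv]; exact inv_mem h
  | mul u v hu hv => rw [map_mul]; exact mul_mem hu hv

lemma magnus_mk_singleton (x : α × Bool) :
    magnus (FreeGroup.mk [x]) = cond x.2 (oneAddX x.1) (oneAddX x.1)⁻¹ := by
  simp [magnus, FreeGroup.lift_mk]

lemma magnus_mk_singleton_pow_mem (x : α × Bool) (m : ℕ) :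
    ((magnus (FreeGroup.mk [x]) ^ m : (FreePowerSeries α)ˣ) : FreePowerSeries α) ∈
      supportedOnPowers x.1 := by
  refine pow_mem ?_ m
  rw [magnus_mk_singleton]
  cases x.2
  · exact (inv_mem (oneAddX_mem_units_supportedOnPowers x.1)).1
  · exact (oneAddX_mem_units_supportedOnPowers x.1).1

lemma coeff_magnus_mk_singleton_pow (x : α × Bool) (m : ℕ) :
    ((magnus (FreeGroup.mk [x]) ^ m : (FreePowerSeries α)ˣ) : FreePowerSeries α) [x.1] =
      m * cond x.2 1 (-1) := by
  rw [← zpow_natCast, coeff_zpow_of_mem (List.cons_ne_nil _ _)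
    (magnus_mem_unitsFiltration_one _), magnus_mk_singleton]
  cases x.2 <;> simp [oneAddX, X, geom]

lemma coe_magnus_mk (L : List (α × Bool)) :
    (magnus (FreeGroup.mk L) : FreePowerSeries α) = ((runLengthEncoding L).map fun r =>
      ((magnus (FreeGroup.mk [r.1]) ^ (r.2 + 1) : (FreePowerSeries α)ˣ) :
        FreePowerSeries α)).prod := by
  rw [FreeGroup.mk_eq_prod_runLengthEncoding, map_list_prod, ← Units.coeHom_apply, map_list_prod,
    List.map_map, List.map_map]
  refine congrArg List.prod (List.map_congr_left fun r _ => ?_)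
  simp only [Function.comp_apply, map_pow, Units.coeHom_apply, Units.val_pow_eq_pow_val]

lemma coeff_magnus_mk_ne_zero {L : List (α × Bool)} (hL : FreeGroup.IsReduced L) :
    (magnus (FreeGroup.mk L) : FreePowerSeries α)
      ((runLengthEncoding L).map fun r => r.1.1) ≠ 0 := by
  let fs := (runLengthEncoding L).map fun r => (r.1.1,
    ((magnus (FreeGroup.mk [r.1]) ^ (r.2 + 1) : (FreePowerSeries α)ˣ) : FreePowerSeries α))
  have hchain : (fs.map Prod.fst).IsChain (· ≠ ·) := by
    simp only [fs, List.map_map, List.isChain_map]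
    exact (isChain_runLengthEncoding hL).imp fun r s h hrs => h.1 (Prod.ext hrs (h.2 hrs))
  have hfs : ∀ y ∈ fs, y.2 ∈ supportedOnPowers y.1 ∧ y.2 [] = 1 := by
    simp only [fs, List.mem_map]
    rintro _ ⟨r, -, rfl⟩
    refine ⟨magnus_mk_singleton_pow_mem r.1 _, ?_⟩
    have := pow_mem (magnus_mem_unitsFiltration_one (FreeGroup.mk [r.1])) (r.2 + 1) [] zero_lt_one
    simpa [sub_eq_zero] using this
  have hprod := prod_apply_of_isChain fs hfs hchain (by simp)
  rw [if_pos rfl] at hprod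
  simp only [fs, List.map_map, Function.comp_def] at hprod
  rw [coe_magnus_mk, hprod]
  refine List.prod_ne_zero fun h0 => ?_
  obtain ⟨⟨⟨a, s⟩, m⟩, -, hr⟩ := List.mem_map.1 h0
  rw [coeff_magnus_mk_singleton_pow] at hr
  cases s <;> simp at hr <;> omega

theorem magnus_injective : Function.Injective (magnus (α := α)) := by
  refine (injective_iff_map_eq_one _).2 fun u hu => ?_
  by_contra hu1
  obtain ⟨x, L, hL⟩ := List.exists_cons_of_ne_nil (mt FreeGroup.toWord_eq_nil_iff.1 hu1)
  obtain ⟨m, R, hR⟩ := exists_runLengthEncoding_cons x L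
  have := coeff_magnus_mk_ne_zero (FreeGroup.isReduced_toWord (x := u))
  rw [FreeGroup.mk_toWord, hu, hL, hR] at this
  exact this rfl

end Magnus

end FreePowerSeries


namespace Monoid.PushoutI

variable {ι : Type*} {G K : ι → Type*} {H : Type*} [∀ i, Group (G i)] [∀ i, Group (K i)]
  [Group H] {φ : ∀ i, H →* G i} {ψ : ∀ i, H →* K i}

/-- The amalgam over `H` is also the amalgam over `H ⧸ L`, where all the maps are injective. -/
theorem of_injective_of_ker_eq (L : Subgroup H) [L.Normal] (hφ : ∀ i, (φ i).ker = L) (i : ι) :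
    Function.Injective (of (φ := φ) i) := by
  let φ' i : H ⧸ L →* G i := QuotientGroup.lift L (φ i) (hφ i).ge
  have hφ' i : Function.Injective (φ' i) := by
    refine (injective_iff_map_eq_one _).2 fun x hx => ?_
    induction x using QuotientGroup.induction_on with
    | H h =>
      rw [QuotientGroup.lift_mk] at hx
      rw [QuotientGroup.eq_one_iff, ← hφ i]
      exact hx
  let m : PushoutI φ →* PushoutI φ' :=
    lift (fun i => of i) ((base φ').comp (QuotientGroup.mk' L)) fun i => by
      ext
      simp [φ', ← of_apply_eq_base φ' i]
  refine Function.Injective.of_comp (f := m) ?_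
  have : m ∘ of i = of i := funext fun g => lift_of _ _ _ g
  rw [this]
  exact of_injective hφ' i

def map (π : ∀ i, G i →* K i) (hπ : ∀ i, (π i).comp (φ i) = ψ i) :
    PushoutI φ →* PushoutI ψ :=
  lift (fun i => (of i).comp (π i)) (base ψ) fun i => by
    rw [MonoidHom.comp_assoc, hπ, of_comp_eq_base]

section QuotientEquiv

variable {π : ∀ i, G i →* K i}

@[simp] lemma map_of {hπ : ∀ i, (π i).comp (φ i) = ψ i} {i : ι} (g : G i) :
    map π hπ (of i g) = of i (π i g) :=
  lift_of _ _ _ g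

@[simp] lemma map_base {hπ : ∀ i, (π i).comp (φ i) = ψ i} (h : H) :
    map π hπ (base φ h) = base ψ h :=
  lift_base _ _ _ h

variable (hsurj : ∀ i, Function.Surjective (π i)) (N : Subgroup (PushoutI φ)) [N.Normal]
  (hker : ∀ i, (π i).ker ≤ N.comap (of i))

noncomputable def ofQuotient (i : ι) : K i →* PushoutI φ ⧸ N :=
  (π i).liftOfSurjective (hsurj i) ⟨(QuotientGroup.mk' N).comp (of i), fun x hx => by
    simpa [QuotientGroup.eq_one_iff] using hker i hx⟩

lemma ofQuotient_apply {i : ι} (g : G i) :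
    ofQuotient hsurj N hker i (π i g) = QuotientGroup.mk (of i g) :=
  MonoidHom.liftOfRightInverse_comp_apply _ _ _ _ g

lemma ofQuotient_comp (hπ : ∀ i, (π i).comp (φ i) = ψ i) (i : ι) :
    (ofQuotient hsurj N hker i).comp (ψ i) = (QuotientGroup.mk' N).comp (base φ) := by
  ext h
  simp [← hπ i, ofQuotient_apply, of_apply_eq_base]

noncomputable def quotientEquiv (hπ : ∀ i, (π i).comp (φ i) = ψ i)
    (hN : N ≤ (map π hπ).ker) : PushoutI φ ⧸ N ≃* PushoutI ψ :=
  (QuotientGroup.lift N (map π hπ) hN).toMulEquiv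
    (lift (ofQuotient hsurj N hker) _ (ofQuotient_comp hsurj N hker hπ))
    (QuotientGroup.monoidHom_ext N <| hom_ext (fun i => by ext; simp [ofQuotient_apply])
      (by ext; simp))
    (hom_ext (fun i => by ext k; obtain ⟨g, rfl⟩ := hsurj i k; simp [ofQuotient_apply])
      (by ext; simp))

@[simp] lemma quotientEquiv_mk_of {hπ : ∀ i, (π i).comp (φ i) = ψ i}
    {hN : N ≤ (map π hπ).ker} {i : ι} (g : G i) :
    quotientEquiv hsurj N hker hπ hN (QuotientGroup.mk (of i g)) = of i (π i g) :=
  map_of (hπ := hπ) g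

end QuotientEquiv

end Monoid.PushoutI

theorem FreeGroup.dvd_of_pow_mem_normalClosure_pow {α : Type*} {u : FreeGroup α} (hu : u ≠ 1)
    {p t : ℕ} (h : u ^ t ∈ Subgroup.normalClosure {u ^ p}) : p ∣ t := by
  classical
  obtain ⟨w, hw, hg, hgw⟩ := FreePowerSeries.exists_coeff_ne_zero_of_mem
    (FreePowerSeries.magnus_mem_unitsFiltration_one u)
    (fun h1 => hu (FreePowerSeries.magnus_injective (h1.trans (_root_.map_one _).symm)))
  refine FreePowerSeries.dvd_of_pow_mem_normalClosure_pow hw hg hgw ?_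
  have := Subgroup.map_normalClosure_le {u ^ p} FreePowerSeries.magnus ⟨u ^ t, h, rfl⟩
  simpa only [Set.image_singleton, map_pow] using this

theorem FreeGroup.orderOf_mk_normalClosure_pow {α : Type*} {u : FreeGroup α} (hu : u ≠ 1)
    (p : ℕ) : orderOf (u : FreeGroup α ⧸ Subgroup.normalClosure {u ^ p}) = p := by
  refine Nat.dvd_antisymm (orderOf_dvd_of_pow_eq_one ?_) (dvd_of_pow_mem_normalClosure_pow hu ?_)
  · rw [← QuotientGroup.mk_pow, QuotientGroup.eq_one_iff]
    exact Subgroup.subset_normalClosure rfl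
  · rw [← QuotientGroup.eq_one_iff, QuotientGroup.mk_pow, pow_orderOf_eq_one]

theorem QuotientGroup.orderOf_mk_eq_of_minimal {G : Type*} [Group G] {N : Subgroup G} [N.Normal]
    {g : G} {p : ℕ} (hp1 : 1 ≤ p) (hp : g ^ p ∈ N)
    (hpmin : ∀ q, 1 ≤ q → g ^ q ∈ N → p ≤ q) :
    orderOf (g : G ⧸ N) = p := by
  refine (orderOf_eq_iff hp1).2 ⟨by rwa [← mk_pow, eq_one_iff], fun m hmp hm0 hm => ?_⟩
  rw [← mk_pow, eq_one_iff] at hm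
  exact absurd (hpmin m hm0 hm) (not_le.2 hmp)

section Case2

open Monoid.PushoutI

/- `Fac n true` and `FreeGroup Bool` (likewise `Fac n false` and `FreeGroup (Fin n)`) agree only
after unfolding `Fac`, which neither instance search nor `rw` does: hence the type ascriptions
and the `Fac`-typed sets below. -/

variable {k n p : ℕ} {u' : FreeGroup (Fin n)} {r : FreeGroup Bool}

def quotMaps (n p : ℕ) (u' : FreeGroup (Fin n)) (r : FreeGroup Bool) :
    ∀ i : Bool, Fac n i →* Fac2 n p u' r i
  | true => QuotientGroup.mk' (Subgroup.normalClosure {r})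
  | false => QuotientGroup.mk' (Subgroup.normalClosure {u' ^ p})

lemma quotMaps_comp_amalMaps (i : Bool) :
    (quotMaps n p u' r i).comp (amalMaps k n u' i) = amalMaps2 k n p u' r i := by
  cases i <;> ext
  · exact QuotientGroup.mk_zpow (N := Subgroup.normalClosure {u' ^ p}) u'⁻¹ 1
  · exact QuotientGroup.mk_zpow (N := Subgroup.normalClosure {r}) (commWord k) 1

lemma quotMaps_surjective (i : Bool) : Function.Surjective (quotMaps n p u' r i) := by
  cases i
  · exact QuotientGroup.mk'_surjective (Subgroup.normalClosure {u' ^ p})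
  · exact QuotientGroup.mk'_surjective (Subgroup.normalClosure {r})

lemma of_commWord :
    of (φ := amalMaps k n u') true (commWord k) = (of (φ := amalMaps k n u') false u')⁻¹ := by
  have h1 : amalMaps k n u' true (Multiplicative.ofAdd 1) = commWord k := zpow_one _
  have h2 : amalMaps k n u' false (Multiplicative.ofAdd 1) = u'⁻¹ := zpow_one _
  rw [← h1, of_apply_eq_base, ← of_apply_eq_base _ false, h2]
  exact map_inv (of (φ := amalMaps k n u') false : FreeGroup (Fin n) →* Amal k n u') u'

lemma normalClosure_le_comap_of_true :
    Subgroup.normalClosure ({r} : Set (Fac n true)) ≤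
      (Subgroup.normalClosure {of (φ := amalMaps k n u') true r}).comap (of true) :=
  Subgroup.normalClosure_le_normal
    (Set.singleton_subset_iff.2 (Subgroup.subset_normalClosure rfl))

lemma of_false_pow_mem_normalClosure (hp : commWord k ^ p ∈ Subgroup.normalClosure {r}) :
    of (φ := amalMaps k n u') false (u' ^ p) ∈
      Subgroup.normalClosure {of (φ := amalMaps k n u') true r} := by
  have h1 : of (φ := amalMaps k n u') false (u' ^ p) = (of false u') ^ p := map_pow _ _ _
  have h2 : of (φ := amalMaps k n u') true (commWord k ^ p) = (of true (commWord k)) ^ p :=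
    map_pow _ _ _
  have h : (of (φ := amalMaps k n u') true (commWord k ^ p))⁻¹ =
      of (φ := amalMaps k n u') false (u' ^ p) := by
    rw [h1, h2, of_commWord, inv_pow, inv_inv]
  exact Eq.subst (motive := (· ∈ Subgroup.normalClosure {of (φ := amalMaps k n u') true r})) h
    (inv_mem (normalClosure_le_comap_of_true hp))

lemma ker_quotMaps_le (hp : commWord k ^ p ∈ Subgroup.normalClosure {r}) (i : Bool) :
    (quotMaps n p u' r i).ker ≤
      (Subgroup.normalClosure {of (φ := amalMaps k n u') true r}).comap (of i) := by
  intro g hg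
  cases i
  · have hg' : g ∈ Subgroup.normalClosure {u' ^ p} :=
      (QuotientGroup.eq_one_iff (N := Subgroup.normalClosure {u' ^ p}) g).1 hg
    exact Subgroup.normalClosure_le_normal (s := ({u' ^ p} : Set (Fac n false)))
      (N := (Subgroup.normalClosure {of (φ := amalMaps k n u') true r}).comap (of false))
      (Set.singleton_subset_iff.2 (of_false_pow_mem_normalClosure hp)) hg'
  · exact normalClosure_le_comap_of_true
      ((QuotientGroup.eq_one_iff (N := Subgroup.normalClosure {r}) g).1 hg)

lemma normalClosure_le_ker_map :
    Subgroup.normalClosure {of (φ := amalMaps k n u') true r} ≤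
      (map (quotMaps n p u' r) quotMaps_comp_amalMaps).ker := by
  refine Subgroup.normalClosure_le_normal (Set.singleton_subset_iff.2 (MonoidHom.mem_ker.2 ?_))
  have hr : quotMaps n p u' r true r = 1 :=
    (QuotientGroup.eq_one_iff (N := Subgroup.normalClosure {r}) r).2
      (Subgroup.subset_normalClosure rfl)
  exact (map_of (φ := amalMaps k n u') (ψ := amalMaps2 k n p u' r) (π := quotMaps n p u' r)
    (i := true) r).trans ((congrArg (of true) hr).trans (_root_.map_one _))

lemma ker_amalMaps2 (hu : u' ≠ 1) (hp1 : 1 ≤ p)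
    (hp : commWord k ^ p ∈ Subgroup.normalClosure {r})
    (hpmin : ∀ q : ℕ, 1 ≤ q → commWord k ^ q ∈ Subgroup.normalClosure {r} → p ≤ q)
    (i : Bool) :
    (amalMaps2 k n p u' r i).ker = Subgroup.zpowers (Multiplicative.ofAdd (p : ℤ)) := by
  cases i
  · refine (zpowersHom_ker_eq
      (G := FreeGroup (Fin n) ⧸ Subgroup.normalClosure {u' ^ p}) _).trans ?_
    rw [QuotientGroup.mk_inv, orderOf_inv, FreeGroup.orderOf_mk_normalClosure_pow hu]
  · refine (zpowersHom_ker_eq (G := FreeGroup Bool ⧸ Subgroup.normalClosure {r}) _).trans ?_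
    rw [QuotientGroup.orderOf_mk_eq_of_minimal hp1 hp hpmin]

end Case2

theorem case2_decomposition_general (k n : ℕ)
    (u' : FreeGroup (Fin n)) (hu : u' ≠ 1)
    (r : FreeGroup Bool) (p : ℕ) (hp1 : 1 ≤ p)
    (hp : commWord k ^ p ∈ Subgroup.normalClosure {r})
    (hpmin : ∀ q : ℕ, 1 ≤ q → commWord k ^ q ∈ Subgroup.normalClosure {r} → p ≤ q) :
    (∃ e : (Amal k n u' ⧸ Subgroup.normalClosure
          {Monoid.PushoutI.of (φ := amalMaps k n u') true r}) ≃*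
        Monoid.PushoutI (amalMaps2 k n p u' r),
      (∀ a : FreeGroup Bool,
        e (QuotientGroup.mk (Monoid.PushoutI.of (φ := amalMaps k n u') true a)) =
          Monoid.PushoutI.of (φ := amalMaps2 k n p u' r) true (QuotientGroup.mk a)) ∧
      (∀ w : FreeGroup (Fin n),
        e (QuotientGroup.mk (Monoid.PushoutI.of (φ := amalMaps k n u') false w)) =
          Monoid.PushoutI.of (φ := amalMaps2 k n p u' r) false (QuotientGroup.mk w))) ∧
    (∀ a : FreeGroup Bool,
      Monoid.PushoutI.of (φ := amalMaps k n u') true a ∈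
        Subgroup.normalClosure {Monoid.PushoutI.of (φ := amalMaps k n u') true r} →
      a ∈ Subgroup.normalClosure {r}) := by
  let e := Monoid.PushoutI.quotientEquiv (quotMaps_surjective (p := p) (u' := u') (r := r)) _
    (ker_quotMaps_le hp) quotMaps_comp_amalMaps normalClosure_le_ker_map
  have he (i : Bool) (g : Fac n i) :
      e (QuotientGroup.mk (Monoid.PushoutI.of i g)) =
        Monoid.PushoutI.of i (quotMaps n p u' r i g) :=
    Monoid.PushoutI.quotientEquiv_mk_of _ _ _ g
  refine ⟨⟨e, he true, he false⟩, fun a ha => ?_⟩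
  have hinj := Monoid.PushoutI.of_injective_of_ker_eq _ (ker_amalMaps2 hu hp1 hp hpmin) true
  rw [← QuotientGroup.eq_one_iff]
  refine hinj (((he true a).symm.trans ?_).trans (map_one _).symm)
  exact (congrArg e ((QuotientGroup.eq_one_iff _).2 ha)).trans (map_one e)

/-- Case 2 of Section 5.2: if `p ≥ 1` is minimal with `[xᵏ,b]ᵖ ∈ ((r̃))`, then
`H/⟨⟨r̃⟩⟩ ≅ H̃/((r̃)) *_{[xᵏ,b]=u⁻¹} ⟨y₁,…,yₙ | uᵖ⟩` (canonically), and in particular the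
natural map `H̃/((r̃)) → H/⟨⟨r̃⟩⟩` is injective. -/
theorem case2_decomposition (k n : ℕ) (hk : 1 ≤ k) (hn : 1 ≤ n)
    (u' : FreeGroup (Fin n)) (hu : u' ≠ 1)
    (r : FreeGroup Bool) (p : ℕ) (hp1 : 1 ≤ p)
    (hp : commWord k ^ p ∈ Subgroup.normalClosure {r})
    (hpmin : ∀ q : ℕ, 1 ≤ q → commWord k ^ q ∈ Subgroup.normalClosure {r} → p ≤ q) :
    (∃ e : (Amal k n u' ⧸ Subgroup.normalClosure
          {Monoid.PushoutI.of (φ := amalMaps k n u') true r}) ≃*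
        Monoid.PushoutI (amalMaps2 k n p u' r),
      (∀ a : FreeGroup Bool,
        e (QuotientGroup.mk (Monoid.PushoutI.of (φ := amalMaps k n u') true a)) =
          Monoid.PushoutI.of (φ := amalMaps2 k n p u' r) true (QuotientGroup.mk a)) ∧
      (∀ w : FreeGroup (Fin n),
        e (QuotientGroup.mk (Monoid.PushoutI.of (φ := amalMaps k n u') false w)) =
          Monoid.PushoutI.of (φ := amalMaps2 k n p u' r) false (QuotientGroup.mk w))) ∧
    (∀ a : FreeGroup Bool,
      Monoid.PushoutI.of (φ := amalMaps k n u') true a ∈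
        Subgroup.normalClosure {Monoid.PushoutI.of (φ := amalMaps k n u') true r} →
      a ∈ Subgroup.normalClosure {r}) :=
  case2_decomposition_general k n u' hu r p hp1 hp hpmin
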